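/- arXiv:2211.01627 — 2 statements merged into one kernel-verified Lean document; each statement's English description precedes it below -/
import Mathlib

section
/- For every y_c ∈ [-1,1], the variance of the conditional expectation E[1_{C(y_c)}(Y) | X2] equals (|y_c| - y_c^2)/4; equivalently, the function g(x2) = (1/2)∫_{-1}^{1} 1_{sign(x1)|x2| ≤ y_c} dx1 satisfies Var(g(X2)) = (|y_c| - y_c^2)/4 when X2 is uniform on [-1,1]. -/
open MeasureTheory ProbabilityTheory Set

/-- The uniform probability measure on the square [-1,1] × [-1,1]. -/
noncomputable def unifSq : Measure (ℝ × ℝ) :=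
  (4 : ENNReal)⁻¹ •
    ((volume.restrict (Icc (-1 : ℝ) 1)).prod (volume.restrict (Icc (-1 : ℝ) 1)))

/-- sign(x) = 1 if x ≥ 0 and -1 if x < 0. -/
noncomputable def sgn (x : ℝ) : ℝ := if 0 ≤ x then 1 else -1

/-- The model output Y = sign(X1)·|X2|. -/
noncomputable def Ymod (ω : ℝ × ℝ) : ℝ := sgn ω.1 * |ω.2|

/-- The membership indicator 1_C(Y). -/
noncomputable def indC (C : Set ℝ) (ω : ℝ × ℝ) : ℝ := C.indicator 1 (Ymod ω)

/-- Region-based first-order Sobol' index of input X (given as a coordinate map)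
for the region C : Var(E[1_C(Y) | X]) / Var(1_C(Y)). -/
noncomputable def SIdx (X : ℝ × ℝ → ℝ) (C : Set ℝ) : ℝ :=
  variance (unifSq[indC C | MeasurableSpace.comap X inferInstance]) unifSq /
    variance (indC C) unifSq

/-! ### Auxiliary definitions and lemmas -/

/-- The marginal measure of the second coordinate. -/
noncomputable def mu2 : Measure ℝ := (2 : ENNReal)⁻¹ • volume.restrict (Icc (-1 : ℝ) 1)

/-- The conditional expectation function. -/
noncomputable def Gfun (yc x2 : ℝ) : ℝ :=
  (if |x2| ≤ yc then (1:ℝ) else 0) + (if -|x2| ≤ yc then (1:ℝ) else 0)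

instance : IsProbabilityMeasure mu2 := by
  constructor
  rw [mu2, Measure.smul_apply, Measure.restrict_apply_univ, Real.volume_Icc, smul_eq_mul]
  norm_num
  exact ENNReal.inv_mul_cancel (by norm_num) (by norm_num)

instance : IsProbabilityMeasure unifSq := by
  constructor
  rw [unifSq, Measure.smul_apply, ← Set.univ_prod_univ, Measure.prod_prod,
    Measure.restrict_apply_univ, Real.volume_Icc, smul_eq_mul]
  norm_num
  exact ENNReal.inv_mul_cancel (by norm_num) (by norm_num)

lemma variance_congr_ae {Ω : Type*} [MeasurableSpace Ω] {μ : Measure Ω} {X Y : Ω → ℝ}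
    (h : X =ᵐ[μ] Y) : variance X μ = variance Y μ := by
  have hint : ∫ x, X x ∂μ = ∫ x, Y x ∂μ := integral_congr_ae h
  rw [variance, variance, evariance, evariance, hint]
  exact congrArg _ (lintegral_congr_ae (h.mono fun ω hω => by simp only [hω]))

lemma map_snd_unifSq : Measure.map Prod.snd unifSq = mu2 := by
  rw [unifSq, mu2, Measure.map_smul, Measure.map_snd_prod, Measure.restrict_apply_univ,
    Real.volume_Icc, smul_smul]
  norm_num
  congr 1
  rw [show (4:ENNReal) = 2*2 by norm_num, ENNReal.mul_inv (by norm_num) (by norm_num),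
    mul_assoc, ENNReal.inv_mul_cancel (by norm_num) (by norm_num), mul_one]

lemma var_snd (g : ℝ → ℝ) (hg : Measurable g) :
    variance (fun ω : ℝ × ℝ => g ω.2) unifSq = variance g mu2 := by
  have hint : ∫ ω, g ω.2 ∂unifSq = ∫ x, g x ∂mu2 := by
    rw [← map_snd_unifSq, integral_map measurable_snd.aemeasurable hg.aestronglyMeasurable]
  rw [variance, variance, evariance, evariance, hint, ← map_snd_unifSq,
    lintegral_map ?_ measurable_snd]
  exact ((hg.sub measurable_const).nnnorm.coe_nnreal_ennreal).pow_const 2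

lemma inner_int (yc x2 : ℝ) :
    ∫ x1 in Icc (-1:ℝ) 1, (if sgn x1 * |x2| ≤ yc then (1:ℝ) else 0) = Gfun yc x2 := by
  have hsplit : Icc (-1:ℝ) 1 = Ico (-1) 0 ∪ Icc 0 1 :=
    (Ico_union_Icc_eq_Icc (by norm_num) (by norm_num)).symm
  have hdisj : Disjoint (Ico (-1:ℝ) 0) (Icc (0:ℝ) 1) := by
    rw [Set.disjoint_left]; intro x hx1 hx2; exact absurd hx2.1 (not_le.mpr hx1.2)
  have hint1 : IntegrableOn (fun x1 : ℝ => if sgn x1 * |x2| ≤ yc then (1:ℝ) else 0) (Ico (-1:ℝ) 0) volume := by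
    refine IntegrableOn.congr_fun (f := fun _ => if -|x2| ≤ yc then (1:ℝ) else 0)
      (integrableOn_const (by simp [Real.volume_Ico])) ?_ measurableSet_Ico
    intro x hx
    have : sgn x = -1 := if_neg (not_le.mpr hx.2)
    simp [this]
  have hint2 : IntegrableOn (fun x1 : ℝ => if sgn x1 * |x2| ≤ yc then (1:ℝ) else 0) (Icc (0:ℝ) 1) volume := by
    refine IntegrableOn.congr_fun (f := fun _ => if |x2| ≤ yc then (1:ℝ) else 0)
      (integrableOn_const (by simp [Real.volume_Icc])) ?_ measurableSet_Icc
    intro x hx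
    have : sgn x = 1 := if_pos hx.1
    simp [this]
  rw [hsplit, setIntegral_union hdisj measurableSet_Icc hint1 hint2]
  have e1 : ∫ x1 in Ico (-1:ℝ) 0, (if sgn x1 * |x2| ≤ yc then (1:ℝ) else 0)
      = (if -|x2| ≤ yc then (1:ℝ) else 0) := by
    rw [setIntegral_congr_fun measurableSet_Ico (g := fun _ => if -|x2| ≤ yc then (1:ℝ) else 0) ?_]
    · rw [setIntegral_const, Real.volume_real_Ico]; norm_num
    · intro x hx
      have : sgn x = -1 := if_neg (not_le.mpr hx.2)
      simp [this]
  have e2 : ∫ x1 in Icc (0:ℝ) 1, (if sgn x1 * |x2| ≤ yc then (1:ℝ) else 0)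
      = (if |x2| ≤ yc then (1:ℝ) else 0) := by
    rw [setIntegral_congr_fun measurableSet_Icc (g := fun _ => if |x2| ≤ yc then (1:ℝ) else 0) ?_]
    · rw [setIntegral_const, Real.volume_real_Icc]; norm_num
    · intro x hx
      have : sgn x = 1 := if_pos hx.1
      simp [this]
  rw [e1, e2, Gfun]; ring

lemma var_core (S : Set ℝ) (hS : MeasurableSet S) (c : ℝ) :
    variance (fun x => (1/2) * (S.indicator (fun _ => (1:ℝ)) x + c)) mu2
      = ((mu2 S).toReal - (mu2 S).toReal ^ 2) / 4 := by
  set p := (mu2 S).toReal with hp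
  set X : ℝ → ℝ := fun x => (1/2) * (S.indicator (fun _ => (1:ℝ)) x + c) with hX
  have hmeas : Measurable X := by
    apply Measurable.const_mul
    exact ((measurable_const.indicator hS).add_const c)
  have hbdd : ∀ᵐ x ∂mu2, X x ∈ Icc (-(1 + |c|)) (1 + |c|) := by
    refine ae_of_all _ fun x => ?_
    have hi : S.indicator (fun _ => (1:ℝ)) x = 0 ∨ S.indicator (fun _ => (1:ℝ)) x = 1 := by
      by_cases hx : x ∈ S
      · right; exact Set.indicator_of_mem hx _
      · left; exact Set.indicator_of_notMem hx _
    rcases hi with hh | hh <;>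
    · simp only [hX, mem_Icc, hh]
      constructor <;> nlinarith [le_abs_self c, neg_abs_le c]
  have hmem : MemLp X 2 mu2 := memLp_of_bounded hbdd hmeas.aestronglyMeasurable 2
  have hind : Integrable (S.indicator (fun _ => (1:ℝ))) mu2 := (integrable_const 1).indicator hS
  have hintX : ∫ x, X x ∂mu2 = (p + c)/2 := by
    have hXe : X = fun x => (1/2 : ℝ) * S.indicator (fun _ => (1:ℝ)) x + c/2 := by
      funext x; rw [hX]; ring
    rw [hXe, integral_add (hind.const_mul _) (integrable_const _), integral_const_mul,
      integral_indicator_const _ hS, integral_const]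
    simp [measure_univ, hp, measureReal_def]
    ring
  have hX2 : (X^2) = fun x => ((1+2*c)/4) * S.indicator (fun _ => (1:ℝ)) x + c^2/4 := by
    funext x
    by_cases hx : x ∈ S
    · simp only [Pi.pow_apply, hX, Set.indicator_of_mem hx]; ring
    · simp only [Pi.pow_apply, hX, Set.indicator_of_notMem hx]; ring
  have hintX2 : ∫ x, (X^2) x ∂mu2 = (1+2*c)/4 * p + c^2/4 := by
    rw [hX2, integral_add (hind.const_mul _) (integrable_const _), integral_const_mul,
      integral_indicator_const _ hS, integral_const]
    simp [measure_univ, hp, measureReal_def]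
  rw [variance_eq_sub hmem, hintX2, hintX]
  ring

lemma meas_abs_le (yc : ℝ) (h0 : 0 ≤ yc) (h1 : yc ≤ 1) :
    (mu2 {x : ℝ | |x| ≤ yc}).toReal = yc := by
  have hset : {x : ℝ | |x| ≤ yc} = Icc (-yc) yc := by ext x; simp [abs_le]
  rw [mu2, hset, Measure.smul_apply, Measure.restrict_apply measurableSet_Icc,
    Icc_inter_Icc, Real.volume_Icc]
  rw [max_eq_left (by linarith), min_eq_left h1]
  rw [show yc - -yc = 2 * yc by ring, ENNReal.ofReal_mul (by norm_num), smul_eq_mul,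
    ← mul_assoc, ENNReal.ofReal_ofNat, ENNReal.inv_mul_cancel (by norm_num) (by norm_num),
    one_mul, ENNReal.toReal_ofReal h0]

lemma meas_abs_ge (yc : ℝ) (h1 : -1 ≤ yc) (h0 : yc < 0) :
    (mu2 {x : ℝ | -yc ≤ |x|}).toReal = 1 + yc := by
  have hS : {x : ℝ | -yc ≤ |x|} ∩ Icc (-1:ℝ) 1 = Icc (-1) yc ∪ Icc (-yc) 1 := by
    ext x
    simp only [mem_inter_iff, mem_setOf_eq, mem_Icc, mem_union, le_abs]
    constructor
    · rintro ⟨h2 | h2, h3, h4⟩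
      · right; exact ⟨h2, h4⟩
      · left; exact ⟨h3, by linarith⟩
    · rintro (⟨h2, h3⟩ | ⟨h2, h3⟩)
      · exact ⟨Or.inr (by linarith), h2, by linarith⟩
      · exact ⟨Or.inl h2, by linarith, h3⟩
  have hmeas : MeasurableSet {x : ℝ | -yc ≤ |x|} := measurableSet_le measurable_const measurable_abs
  rw [mu2, Measure.smul_apply, Measure.restrict_apply hmeas, hS,
    measure_union (by rw [Set.disjoint_left]; intro x hx1 hx2; simp only [mem_Icc] at *; linarith) measurableSet_Icc,
    Real.volume_Icc, Real.volume_Icc]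
  rw [show yc - -1 = 1 + yc by ring, show (1:ℝ) - -yc = 1 + yc by ring,
    ← ENNReal.ofReal_add (by linarith) (by linarith), show (1+yc)+(1+yc) = 2*(1+yc) by ring,
    ENNReal.ofReal_mul (by norm_num), smul_eq_mul, ← mul_assoc, ENNReal.ofReal_ofNat,
    ENNReal.inv_mul_cancel (by norm_num) (by norm_num), one_mul,
    ENNReal.toReal_ofReal (by linarith)]

/-- The variance of x2 ↦ (1/2)·G(yc, x2) under mu2. -/
lemma var_G (yc : ℝ) (h : yc ∈ Icc (-1 : ℝ) 1) :
    variance (fun x2 : ℝ => (1/2) * Gfun yc x2) mu2 = (|yc| - yc ^ 2) / 4 := by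
  rcases le_or_gt 0 yc with h0 | h0
  · have hG : (fun x2 : ℝ => (1/2) * Gfun yc x2)
        = fun x => (1/2) * ({x : ℝ | |x| ≤ yc}.indicator (fun _ => (1:ℝ)) x + 1) := by
      funext x
      have h2 : -|x| ≤ yc := le_trans (neg_nonpos.mpr (abs_nonneg x)) h0
      simp only [Gfun, if_pos h2, Set.indicator_apply, mem_setOf_eq]
    rw [hG, var_core _ (measurableSet_le measurable_abs measurable_const) 1,
      meas_abs_le yc h0 h.2, abs_of_nonneg h0]
  · have hG : (fun x2 : ℝ => (1/2) * Gfun yc x2)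
        = fun x => (1/2) * ({x : ℝ | -yc ≤ |x|}.indicator (fun _ => (1:ℝ)) x + 0) := by
      funext x
      have h2 : ¬ (|x| ≤ yc) := not_le.mpr (lt_of_lt_of_le h0 (abs_nonneg x))
      have h3 : -|x| ≤ yc ↔ -yc ≤ |x| := neg_le
      simp only [Gfun, if_neg h2, Set.indicator_apply, mem_setOf_eq, zero_add, add_zero, h3]
    rw [hG, var_core _ (measurableSet_le measurable_const measurable_abs) 0,
      meas_abs_ge yc h.1 h0, abs_of_neg h0]
    ring

lemma Gfun_measurable (yc : ℝ) : Measurable (Gfun yc) :=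
  (Measurable.ite (measurableSet_le measurable_abs measurable_const)
      measurable_const measurable_const).add
    (Measurable.ite (measurableSet_le measurable_abs.neg measurable_const)
      measurable_const measurable_const)

lemma Gfun_bounds (yc x : ℝ) : 0 ≤ Gfun yc x ∧ Gfun yc x ≤ 2 := by
  unfold Gfun
  constructor <;> split <;> split <;> norm_num

theorem stmt3 (yc : ℝ) (h : yc ∈ Icc (-1 : ℝ) 1) :
    variance
      (unifSq[indC (Icc (-1 : ℝ) yc) | MeasurableSpace.comap Prod.snd inferInstance])
      unifSq = (|yc| - yc ^ 2) / 4 ∧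
    variance
      (fun x2 : ℝ => (1 / 2) * ∫ x1 in Icc (-1 : ℝ) 1,
        (if sgn x1 * |x2| ≤ yc then (1 : ℝ) else 0))
      ((2 : ENNReal)⁻¹ • volume.restrict (Icc (-1 : ℝ) 1)) = (|yc| - yc ^ 2) / 4 := by
  have hpart2 : variance
      (fun x2 : ℝ => (1 / 2) * ∫ x1 in Icc (-1 : ℝ) 1,
        (if sgn x1 * |x2| ≤ yc then (1 : ℝ) else 0)) mu2 = (|yc| - yc ^ 2) / 4 := by
    have : (fun x2 : ℝ => (1 / 2) * ∫ x1 in Icc (-1 : ℝ) 1,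
        (if sgn x1 * |x2| ≤ yc then (1 : ℝ) else 0))
        = fun x2 : ℝ => (1/2) * Gfun yc x2 := by
      funext x2; rw [inner_int]
    rw [this, var_G yc h]
  refine ⟨?_, hpart2⟩
  -- Part 1 : identify the conditional expectation
  set g : ℝ → ℝ := fun x2 => (1/2) * Gfun yc x2 with hg
  have hgmeas : Measurable g := (Gfun_measurable yc).const_mul _
  set F : ℝ × ℝ → ℝ := fun ω => g ω.2 with hF
  set f : ℝ × ℝ → ℝ := indC (Icc (-1 : ℝ) yc) with hf
  have hm : (MeasurableSpace.comap (Prod.snd : ℝ × ℝ → ℝ) (inferInstance : MeasurableSpace ℝ))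
      ≤ (inferInstance : MeasurableSpace (ℝ × ℝ)) := measurable_snd.comap_le
  have hsgn : Measurable sgn :=
    Measurable.ite (measurableSet_le measurable_const measurable_id)
      measurable_const measurable_const
  have hYmod : Measurable Ymod :=
    (hsgn.comp measurable_fst).mul (measurable_abs.comp measurable_snd)
  have hfmeas : Measurable f := (measurable_one.indicator measurableSet_Icc).comp hYmod
  have hfbd : ∀ ω, ‖f ω‖ ≤ 1 := by
    intro ω
    rw [hf, indC, Set.indicator_apply]
    split <;> simp
  have hfint : Integrable f unifSq :=
    ⟨hfmeas.aestronglyMeasurable, HasFiniteIntegral.of_bounded (C := 1) (ae_of_all _ hfbd)⟩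
  have hgbd : ∀ x, ‖g x‖ ≤ 1 := by
    intro x
    obtain ⟨hb1, hb2⟩ := Gfun_bounds yc x
    rw [hg, Real.norm_eq_abs, abs_le]
    constructor <;> nlinarith
  have hFint : Integrable F unifSq :=
    ⟨(hgmeas.comp measurable_snd).aestronglyMeasurable,
      HasFiniteIntegral.of_bounded (C := 1) (ae_of_all _ fun ω => hgbd ω.2)⟩
  have hgm : AEStronglyMeasurable[MeasurableSpace.comap Prod.snd inferInstance] F unifSq := by
    have hsndm : Measurable[MeasurableSpace.comap (Prod.snd : ℝ × ℝ → ℝ) inferInstance]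
        (Prod.snd : ℝ × ℝ → ℝ) := measurable_iff_comap_le.mpr le_rfl
    exact StronglyMeasurable.aestronglyMeasurable
      (Measurable.stronglyMeasurable (hgmeas.comp hsndm))
  have key : ∀ (t : Set ℝ), MeasurableSet t →
      ∫ ω in Prod.snd ⁻¹' t, F ω ∂unifSq = ∫ ω in Prod.snd ⁻¹' t, f ω ∂unifSq := by
    intro t ht
    set ρ : Measure ℝ := volume.restrict (Icc (-1:ℝ) 1) with hρ
    set ρt : Measure ℝ := ρ.restrict t with hρt
    haveI : IsFiniteMeasure ρt := by
      constructor
      rw [hρt, Measure.restrict_apply_univ]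
      exact lt_of_le_of_lt (measure_mono (subset_univ t)) (measure_lt_top ρ univ)
    have hres : unifSq.restrict (Prod.snd ⁻¹' t) = (4 : ENNReal)⁻¹ • (ρ.prod ρt) := by
      rw [unifSq, Measure.restrict_smul, ← Set.univ_prod, ← Measure.prod_restrict,
        Measure.restrict_univ]
    rw [show (∫ ω in Prod.snd ⁻¹' t, F ω ∂unifSq) = ∫ ω, F ω ∂(unifSq.restrict (Prod.snd ⁻¹' t)) from rfl,
      show (∫ ω in Prod.snd ⁻¹' t, f ω ∂unifSq) = ∫ ω, f ω ∂(unifSq.restrict (Prod.snd ⁻¹' t)) from rfl,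
      hres, integral_smul_measure, integral_smul_measure]
    congr 1
    have hFint' : Integrable F (ρ.prod ρt) :=
      ⟨(hgmeas.comp measurable_snd).aestronglyMeasurable,
        HasFiniteIntegral.of_bounded (C := 1) (ae_of_all _ fun ω => hgbd ω.2)⟩
    have hfint' : Integrable f (ρ.prod ρt) :=
      ⟨hfmeas.aestronglyMeasurable, HasFiniteIntegral.of_bounded (C := 1) (ae_of_all _ hfbd)⟩
    rw [integral_prod_symm _ hFint', integral_prod_symm _ hfint']
    refine integral_congr_ae ?_
    have hae : ∀ᵐ x2 ∂ρt, x2 ∈ Icc (-1:ℝ) 1 :=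
      (ae_restrict_mem measurableSet_Icc).filter_mono (ae_mono Measure.restrict_le_self)
    filter_upwards [hae] with x2 hx2
    have habs2 : |x2| ≤ 1 := abs_le.mpr ⟨hx2.1, hx2.2⟩
    have hieq : ∀ x1 : ℝ, f (x1, x2) = if sgn x1 * |x2| ≤ yc then (1:ℝ) else 0 := by
      intro x1
      have hs1 : |sgn x1| = 1 := by unfold sgn; split <;> simp
      have h1 : -1 ≤ sgn x1 * |x2| := by
        have := neg_abs_le (sgn x1 * |x2|)
        rw [abs_mul, hs1, one_mul, abs_abs] at this
        linarith
      rw [hf, indC, Set.indicator_apply]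
      simp only [Ymod, mem_Icc, h1, true_and, Pi.one_apply]
    have lhs : (∫ x1, F (x1, x2) ∂ρ) = Gfun yc x2 := by
      have hb : (fun x1 : ℝ => F (x1, x2)) = fun _ => g x2 := rfl
      rw [hb, integral_const, hρ, measureReal_restrict_apply_univ, Real.volume_real_Icc]
      norm_num
      rw [hg]; ring
    have rhs : (∫ x1, f (x1, x2) ∂ρ) = Gfun yc x2 := by
      rw [integral_congr_ae (ae_of_all _ hieq), hρ]
      exact inner_int yc x2
    rw [lhs, rhs]
  have heq : F =ᵐ[unifSq]
      unifSq[f | MeasurableSpace.comap Prod.snd inferInstance] := by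
    refine ae_eq_condExp_of_forall_setIntegral_eq hm hfint
      (fun s _ _ => hFint.integrableOn) ?_ hgm
    intro s hs _
    obtain ⟨t, ht, rfl⟩ := hs
    exact key t ht
  rw [← variance_congr_ae heq]
  rw [hF, var_snd g hgmeas]
  exact var_G yc h
end

section
/- For every y_c ∈ (-1,1), the region-based first-order Sobol' index of input X1 for the region C(y_c) equals SI_1^{C(y_c)} = (1 - |y_c|)^2/(1 - y_c^2). -/
open MeasureTheory ProbabilityTheory Set

noncomputable def nuI : Measure ℝ := volume.restrict (Icc (-1 : ℝ) 1)

noncomputable def gOne (yc x : ℝ) : ℝ := if 0 ≤ x then max yc 0 else 1 + min yc 0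

lemma measurable_sgn : Measurable sgn := by
  unfold sgn
  exact Measurable.ite measurableSet_Ici measurable_const measurable_const

lemma measurable_Ymod : Measurable Ymod :=
  (measurable_sgn.comp measurable_fst).mul measurable_snd.abs

lemma measurable_gOne (yc : ℝ) : Measurable (gOne yc) := by
  unfold gOne
  exact Measurable.ite measurableSet_Ici measurable_const measurable_const

lemma indC_eq (C : Set ℝ) : indC C = (Ymod ⁻¹' C).indicator (fun _ => (1:ℝ)) := by
  funext ω
  by_cases hc : Ymod ω ∈ C <;> simp [indC, Set.indicator_apply, mem_preimage, hc]

lemma measurable_indC (C : Set ℝ) (hC : MeasurableSet C) : Measurable (indC C) := by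
  rw [indC_eq]
  exact measurable_const.indicator (measurable_Ymod hC)

lemma indC_bound (C : Set ℝ) (ω : ℝ × ℝ) : ‖indC C ω‖ ≤ 1 := by
  rw [indC_eq]
  by_cases hc : ω ∈ Ymod ⁻¹' C <;> simp [Set.indicator_apply, hc]

instance : IsFiniteMeasure nuI := by unfold nuI; infer_instance
instance : SFinite nuI := by unfold nuI; infer_instance

lemma nuI_univ : nuI univ = 2 := by
  simp [nuI, Real.volume_Icc]
  norm_num

lemma unifSq_eq : unifSq = (4 : ENNReal)⁻¹ • (nuI.prod nuI) := rfl

instance inst_s4 : IsProbabilityMeasure unifSq := by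
  constructor
  rw [unifSq_eq]
  rw [Measure.smul_apply, ← Set.univ_prod_univ, Measure.prod_prod, nuI_univ,
    show ((2:ENNReal) * 2) = 4 by norm_num]
  exact ENNReal.inv_mul_cancel (by norm_num) (by norm_num)

lemma inner_pos (yc : ℝ) (h2 : yc < 1) (x : ℝ) (hx : 0 ≤ x) :
    ∫ y, (Icc (-1:ℝ) yc).indicator 1 (sgn x * |y|) ∂nuI = 2 * max yc 0 := by
  have hs : sgn x = 1 := if_pos hx
  have heq : ∀ y : ℝ, (Icc (-1:ℝ) yc).indicator 1 (sgn x * |y|) =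
      (Icc (-yc) yc).indicator (fun _ => (1:ℝ)) y := by
    intro y
    rw [hs, one_mul]
    simp only [Set.indicator_apply, mem_Icc, Pi.one_apply]
    refine if_congr ?_ rfl rfl
    constructor
    · rintro ⟨-, hb⟩
      exact abs_le.mp hb
    · intro hy
      exact ⟨le_trans (by norm_num) (abs_nonneg y), abs_le.mpr hy⟩
  simp_rw [heq]
  rw [integral_indicator_const (1:ℝ) measurableSet_Icc]
  have hm : nuI (Icc (-yc) yc) = ENNReal.ofReal (2 * yc) := by
    rw [nuI, Measure.restrict_apply measurableSet_Icc, Icc_inter_Icc]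
    rw [show max (-yc) (-1) = -yc from max_eq_left (by linarith),
      show min yc 1 = yc from min_eq_left h2.le, Real.volume_Icc]
    ring_nf
  rw [measureReal_def, hm, smul_eq_mul, mul_one, ENNReal.toReal_ofReal']
  rcases le_total 0 yc with hyc | hyc
  · rw [max_eq_left (by linarith), max_eq_left hyc]
  · rw [max_eq_right (by linarith), max_eq_right hyc, mul_zero]

lemma inner_neg (yc : ℝ) (h1 : -1 < yc) (x : ℝ) (hx : ¬ 0 ≤ x) :
    ∫ y, (Icc (-1:ℝ) yc).indicator 1 (sgn x * |y|) ∂nuI = 2 * (1 + min yc 0) := by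
  have hs : sgn x = -1 := if_neg hx
  rcases le_or_gt 0 yc with hyc | hyc
  · have heq : ∀ y : ℝ, (Icc (-1:ℝ) yc).indicator 1 (sgn x * |y|) =
        (Icc (-1:ℝ) 1).indicator (fun _ => (1:ℝ)) y := by
      intro y
      rw [hs, neg_one_mul]
      simp only [Set.indicator_apply, mem_Icc, Pi.one_apply]
      refine if_congr ?_ rfl rfl
      constructor
      · rintro ⟨ha, -⟩
        have h3 : |y| ≤ 1 := by linarith
        exact abs_le.mp h3
      · intro hy
        have h3 := abs_le.mpr hy
        have h4 := abs_nonneg y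
        exact ⟨by linarith, by linarith⟩
    simp_rw [heq]
    rw [integral_indicator_const (1:ℝ) measurableSet_Icc]
    have hm : nuI (Icc (-1:ℝ) 1) = 2 := by
      rw [nuI, Measure.restrict_apply measurableSet_Icc, inter_self, Real.volume_Icc]
      norm_num
    rw [measureReal_def, hm, min_eq_right hyc]
    norm_num
  · have heq : ∀ y : ℝ, (Icc (-1:ℝ) yc).indicator 1 (sgn x * |y|) =
        (Icc (-1:ℝ) yc ∪ Icc (-yc) 1).indicator (fun _ => (1:ℝ)) y := by
      intro y
      rw [hs, neg_one_mul]
      simp only [Set.indicator_apply, mem_Icc, mem_union, Pi.one_apply]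
      refine if_congr ?_ rfl rfl
      constructor
      · rintro ⟨ha, hb⟩
        rcases le_or_gt y 0 with hy0 | hy0
        · rw [abs_of_nonpos hy0, neg_neg] at ha hb
          left; exact ⟨by linarith, by linarith⟩
        · rw [abs_of_pos hy0] at ha hb
          right; exact ⟨by linarith, by linarith⟩
      · rintro (⟨ha, hb⟩ | ⟨ha, hb⟩)
        · rw [abs_of_nonpos (by linarith : y ≤ 0), neg_neg]
          exact ⟨ha, hb⟩
        · rw [abs_of_nonneg (by linarith : 0 ≤ y)]
          exact ⟨by linarith, by linarith⟩
    simp_rw [heq]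
    rw [integral_indicator_const (1:ℝ) (measurableSet_Icc.union measurableSet_Icc)]
    have hdisj : Disjoint (Icc (-1:ℝ) yc) (Icc (-yc) 1) := by
      apply Set.disjoint_left.mpr
      rintro y ⟨-, hb⟩ ⟨hc, -⟩
      linarith
    have hm1 : nuI (Icc (-1:ℝ) yc) = ENNReal.ofReal (yc + 1) := by
      rw [nuI, Measure.restrict_apply measurableSet_Icc, Icc_inter_Icc]
      rw [show max (-1:ℝ) (-1) = -1 by simp, show min yc 1 = yc from min_eq_left (by linarith),
        Real.volume_Icc]
      ring_nf
    have hm2 : nuI (Icc (-yc) 1) = ENNReal.ofReal (1 + yc) := by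
      rw [nuI, Measure.restrict_apply measurableSet_Icc, Icc_inter_Icc]
      rw [show max (-yc) (-1) = -yc from max_eq_left (by linarith),
        show min (1:ℝ) 1 = 1 by simp, Real.volume_Icc]
      ring_nf
    rw [measureReal_def, measure_union hdisj measurableSet_Icc, hm1, hm2,
      ← ENNReal.ofReal_add (by linarith) (by linarith), smul_eq_mul, mul_one,
      ENNReal.toReal_ofReal (by linarith), min_eq_left hyc.le]
    ring


lemma nuI_Ici : nuI (Ici 0) = 1 := by
  rw [nuI, Measure.restrict_apply measurableSet_Ici]
  have : Ici (0:ℝ) ∩ Icc (-1) 1 = Icc 0 1 := by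
    ext x
    simp only [mem_inter_iff, mem_Ici, mem_Icc]
    constructor
    · rintro ⟨h1, -, h3⟩; exact ⟨h1, h3⟩
    · rintro ⟨h1, h2⟩; exact ⟨h1, by linarith, h2⟩
  rw [this, Real.volume_Icc]
  norm_num

lemma gOne_bound (yc : ℝ) (h1 : -1 < yc) (h2 : yc < 1) (x : ℝ) : ‖gOne yc x‖ ≤ 1 := by
  rw [gOne]
  split_ifs with hx
  · rw [Real.norm_eq_abs, abs_of_nonneg (le_max_right yc 0)]
    exact max_le h2.le zero_le_one
  · have hmin : min yc 0 ≤ 0 := min_le_right yc 0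
    have hmin2 : -1 ≤ min yc 0 := le_min h1.le (by norm_num)
    rw [Real.norm_eq_abs, abs_of_nonneg (by linarith : (0:ℝ) ≤ 1 + min yc 0)]
    linarith

lemma integrable_of_bound1 {α : Type*} [MeasurableSpace α] (μ : Measure α) [IsFiniteMeasure μ]
    (f : α → ℝ) (hf : Measurable f) (hb : ∀ x, ‖f x‖ ≤ 1) : Integrable f μ :=
  Integrable.mono' (integrable_const 1) hf.aestronglyMeasurable (ae_of_all _ hb)

lemma unifSq_restrict (t : Set ℝ) :
    unifSq.restrict (Prod.fst ⁻¹' t) = (4 : ENNReal)⁻¹ • ((nuI.restrict t).prod nuI) := by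
  rw [unifSq_eq, Measure.restrict_smul, ← Set.prod_univ, ← Measure.prod_restrict,
    Measure.restrict_univ]

lemma inner_indC (yc : ℝ) (h1 : -1 < yc) (h2 : yc < 1) (x : ℝ) :
    ∫ y, indC (Icc (-1:ℝ) yc) (x, y) ∂nuI = 2 * gOne yc x := by
  by_cases hx : 0 ≤ x
  · rw [gOne, if_pos hx]
    simpa only [indC, Ymod] using inner_pos yc h2 x hx
  · rw [gOne, if_neg hx]
    simpa only [indC, Ymod] using inner_neg yc h1 x hx


lemma setIntegral_indC (yc : ℝ) (h1 : -1 < yc) (h2 : yc < 1) (t : Set ℝ) :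
    ∫ ω in Prod.fst ⁻¹' t, indC (Icc (-1:ℝ) yc) ω ∂unifSq
      = (4:ℝ)⁻¹ * ∫ x in t, 2 * gOne yc x ∂nuI := by
  rw [unifSq_restrict t, integral_smul_measure]
  have hint : Integrable (indC (Icc (-1:ℝ) yc)) ((nuI.restrict t).prod nuI) :=
    integrable_of_bound1 _ _ (measurable_indC _ measurableSet_Icc) (indC_bound _)
  rw [integral_prod _ hint]
  simp_rw [inner_indC yc h1 h2]
  rw [smul_eq_mul]
  norm_num

lemma setIntegral_g (yc : ℝ) (h1 : -1 < yc) (h2 : yc < 1) (t : Set ℝ) :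
    ∫ ω in Prod.fst ⁻¹' t, gOne yc ω.1 ∂unifSq = (4:ℝ)⁻¹ * ∫ x in t, 2 * gOne yc x ∂nuI := by
  rw [unifSq_restrict t, integral_smul_measure]
  have hint : Integrable (fun ω : ℝ × ℝ => gOne yc ω.1) ((nuI.restrict t).prod nuI) :=
    integrable_of_bound1 _ _ ((measurable_gOne yc).comp measurable_fst)
      (fun ω => gOne_bound yc h1 h2 ω.1)
  rw [integral_prod _ hint]
  have hin : ∀ x : ℝ, ∫ _ : ℝ, gOne yc x ∂nuI = 2 * gOne yc x := by
    intro x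
    rw [integral_const, measureReal_def, nuI_univ]
    norm_num
  simp_rw [hin]
  rw [smul_eq_mul]
  norm_num

lemma condexp_indC_eq (yc : ℝ) (h1 : -1 < yc) (h2 : yc < 1) :
    (fun ω : ℝ × ℝ => gOne yc ω.1)
      =ᵐ[unifSq] unifSq[indC (Icc (-1:ℝ) yc) | MeasurableSpace.comap Prod.fst inferInstance] := by
  refine ae_eq_condExp_of_forall_setIntegral_eq (measurable_fst.comap_le)
    (integrable_of_bound1 _ _ (measurable_indC _ measurableSet_Icc) (indC_bound _))
    (fun s _ _ => (integrable_of_bound1 _ _ ((measurable_gOne yc).comp measurable_fst)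
      (fun ω => gOne_bound yc h1 h2 ω.1)).integrableOn)
    ?_ ?_
  · rintro s ⟨t, ht, rfl⟩ -
    rw [setIntegral_g yc h1 h2 t, setIntegral_indC yc h1 h2 t]
  · exact (((measurable_gOne yc).comp (comap_measurable Prod.fst)).stronglyMeasurable).aestronglyMeasurable

lemma variance_ae_eq {α : Type*} [MeasurableSpace α] {μ : Measure α} {f g : α → ℝ}
    (h : f =ᵐ[μ] g) : variance f μ = variance g μ := by
  have hint : μ[f] = μ[g] := integral_congr_ae h
  simp only [ProbabilityTheory.variance, ProbabilityTheory.evariance]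
  congr 1
  apply lintegral_congr_ae
  filter_upwards [h] with ω hω
  rw [hω, hint]

lemma unifSq_halfspace : unifSq ((Prod.fst : ℝ × ℝ → ℝ) ⁻¹' Ici 0) = 2⁻¹ := by
  rw [unifSq_eq, Measure.smul_apply, ← Set.prod_univ, Measure.prod_prod, nuI_univ, nuI_Ici,
    one_mul, smul_eq_mul]
  rw [show (4:ENNReal) = 2 * 2 by norm_num, ENNReal.mul_inv (by norm_num) (by norm_num),
    mul_assoc, ENNReal.inv_mul_cancel (by norm_num) (by norm_num), mul_one]

lemma integral_step (c d : ℝ) :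
    ∫ ω : ℝ × ℝ, (if 0 ≤ ω.1 then c else d) ∂unifSq = (c + d) / 2 := by
  have hrw : (fun ω : ℝ × ℝ => if 0 ≤ ω.1 then c else d)
      = fun ω => d + (c - d) * ((Prod.fst : ℝ × ℝ → ℝ) ⁻¹' Ici 0).indicator (fun _ => (1:ℝ)) ω := by
    funext ω
    by_cases hx : 0 ≤ ω.1 <;>
      simp [Set.indicator_apply, mem_preimage, mem_Ici, hx]
  rw [hrw]
  have hmeas : MeasurableSet ((Prod.fst : ℝ × ℝ → ℝ) ⁻¹' Ici (0:ℝ)) :=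
    measurable_fst measurableSet_Ici
  have hii : Integrable (((Prod.fst : ℝ × ℝ → ℝ) ⁻¹' Ici (0:ℝ)).indicator (fun _ => (1:ℝ))) unifSq :=
    (integrable_const (1:ℝ)).indicator hmeas
  rw [integral_add (integrable_const d) (hii.const_mul (c - d)), integral_const,
    integral_const_mul, integral_indicator_const (1:ℝ) hmeas,
    measureReal_def unifSq ((Prod.fst : ℝ × ℝ → ℝ) ⁻¹' Ici 0), unifSq_halfspace]
  simp [ENNReal.toReal_inv]
  ring

lemma var_gfun (yc : ℝ) (h1 : -1 < yc) (h2 : yc < 1) :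
    variance (fun ω : ℝ × ℝ => gOne yc ω.1) unifSq = (1 - |yc|) ^ 2 / 4 := by
  have hmem : MemLp (fun ω : ℝ × ℝ => gOne yc ω.1) 2 unifSq :=
    MemLp.of_bound ((measurable_gOne yc).comp measurable_fst).aestronglyMeasurable 1
      (ae_of_all _ fun ω => gOne_bound yc h1 h2 ω.1)
  rw [variance_eq_sub hmem]
  have hint1 : ∫ ω : ℝ × ℝ, gOne yc ω.1 ∂unifSq = (max yc 0 + (1 + min yc 0)) / 2 :=
    integral_step (max yc 0) (1 + min yc 0)
  have hsq : (fun ω : ℝ × ℝ => gOne yc ω.1) ^ 2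
      = fun ω : ℝ × ℝ => if 0 ≤ ω.1 then (max yc 0) ^ 2 else (1 + min yc 0) ^ 2 := by
    funext ω
    simp only [Pi.pow_apply, gOne]
    split_ifs <;> rfl
  have hint2 : ∫ ω : ℝ × ℝ, ((fun ω : ℝ × ℝ => gOne yc ω.1) ^ 2) ω ∂unifSq
      = ((max yc 0) ^ 2 + (1 + min yc 0) ^ 2) / 2 := by
    rw [hsq]; exact integral_step _ _
  rw [show (unifSq[(fun ω : ℝ × ℝ => gOne yc ω.1) ^ 2]) = ((max yc 0) ^ 2 + (1 + min yc 0) ^ 2) / 2 from hint2,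
    show (unifSq[fun ω : ℝ × ℝ => gOne yc ω.1]) = (max yc 0 + (1 + min yc 0)) / 2 from hint1]
  have hab : max yc 0 + min yc 0 = yc := by rw [max_add_min, add_zero]
  have hamb : max yc 0 - min yc 0 = |yc| := by
    rcases le_total yc 0 with hy | hy
    · rw [max_eq_right hy, min_eq_left hy, abs_of_nonpos hy]; ring
    · rw [max_eq_left hy, min_eq_right hy, abs_of_nonneg hy]; ring
  nlinarith [sq_abs yc, hab, hamb]

lemma integral_gOne (yc : ℝ) : ∫ x, gOne yc x ∂nuI = max yc 0 + (1 + min yc 0) := by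
  have hrw : gOne yc = fun x => (1 + min yc 0)
      + (max yc 0 - (1 + min yc 0)) * (Ici (0:ℝ)).indicator (fun _ => (1:ℝ)) x := by
    funext x
    rw [gOne]
    by_cases hx : 0 ≤ x <;> simp [Set.indicator_apply, mem_Ici, hx]
  rw [hrw, integral_add (integrable_const _)
      (((integrable_const (1:ℝ)).indicator measurableSet_Ici).const_mul _),
    integral_const, integral_const_mul, integral_indicator_const (1:ℝ) measurableSet_Ici,
    measureReal_def nuI (Ici 0), measureReal_def nuI univ, nuI_Ici, nuI_univ]
  simp
  ring

lemma integral_indC (yc : ℝ) (h1 : -1 < yc) (h2 : yc < 1) :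
    ∫ ω, indC (Icc (-1:ℝ) yc) ω ∂unifSq = (1 + yc) / 2 := by
  have h0 := setIntegral_indC yc h1 h2 univ
  rw [preimage_univ, Measure.restrict_univ, Measure.restrict_univ] at h0
  rw [h0, integral_const_mul, integral_gOne]
  have hab : max yc 0 + min yc 0 = yc := by rw [max_add_min, add_zero]
  linarith

lemma var_indC (yc : ℝ) (h1 : -1 < yc) (h2 : yc < 1) :
    variance (indC (Icc (-1:ℝ) yc)) unifSq = (1 + yc) / 2 - ((1 + yc) / 2) ^ 2 := by
  have hmem : MemLp (indC (Icc (-1:ℝ) yc)) 2 unifSq :=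
    MemLp.of_bound (measurable_indC _ measurableSet_Icc).aestronglyMeasurable 1
      (ae_of_all _ (indC_bound _))
  rw [variance_eq_sub hmem]
  have hsq : (indC (Icc (-1:ℝ) yc)) ^ 2 = indC (Icc (-1:ℝ) yc) := by
    funext ω
    rw [Pi.pow_apply, indC_eq]
    by_cases hc : ω ∈ Ymod ⁻¹' Icc (-1:ℝ) yc <;> simp [Set.indicator_apply, hc]
  rw [show (unifSq[(indC (Icc (-1:ℝ) yc)) ^ 2]) = (1 + yc) / 2 by
      rw [hsq]; exact integral_indC yc h1 h2,
    show (unifSq[indC (Icc (-1:ℝ) yc)]) = (1 + yc) / 2 from integral_indC yc h1 h2]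


theorem stmt4 (yc : ℝ) (h : yc ∈ Ioo (-1 : ℝ) 1) :
    SIdx Prod.fst (Icc (-1 : ℝ) yc) = (1 - |yc|) ^ 2 / (1 - yc ^ 2) := by
  obtain ⟨h1, h2⟩ := h
  rw [SIdx, variance_ae_eq (condexp_indC_eq yc h1 h2).symm, var_gfun yc h1 h2,
    var_indC yc h1 h2]
  have hden : (1 + yc) / 2 - ((1 + yc) / 2) ^ 2 = (1 - yc ^ 2) / 4 := by ring
  rw [hden]
  have hne : (1 : ℝ) - yc ^ 2 ≠ 0 := by nlinarith
  field_simp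
end
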